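/- arXiv:1902.02155 — 5 statements merged into one kernel-verified Lean document; each statement's English description precedes it below -/
import Mathlib

section
/- Let (X_i)_{i≥1} be independent, identically distributed random variables taking values in the natural numbers {0,1,2,...} with finite mean μ = E[X_1] > 1. Then there exist ε > 0 and A ∈ (0,1) such that for every n ≥ 1 and every natural number m with m ≤ (1+ε)·n one has P(X_1 + ... + X_n < m) ≤ A^n. -/
/-!
Truncate at a level `K` so large that the mean `c` of `min X₀ K` still exceeds `1`. The truncated
variables are bounded, so Hoeffding's inequality bounds the probability that their sum is at most
`n (c - δ)` by `exp (-2 δ² / K²) ^ n`. With `ε = δ = (c - 1) / 2`, the event `∑ Xᵢ < m ≤ (1 + ε) n`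
lies inside that event, because `1 + δ = c - δ` and truncation only decreases the sum.
-/

open MeasureTheory ProbabilityTheory Filter Topology Real

section

variable {Ω : Type*} [MeasurableSpace Ω] {μ : Measure Ω}

theorem tendsto_integral_min_natCast [IsFiniteMeasure μ] {X : Ω → ℝ} (hX : Integrable X μ) :
    Tendsto (fun K : ℕ => ∫ ω, min (X ω) K ∂μ) atTop (𝓝 (∫ ω, X ω ∂μ)) := by
  refine integral_tendsto_of_tendsto_of_monotone (fun K => hX.inf (integrable_const _)) hX
    (ae_of_all _ fun ω _ _ hKL => min_le_min_left _ (Nat.mono_cast hKL))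
    (ae_of_all _ fun ω => tendsto_const_nhds.congr' ?_)
  filter_upwards [tendsto_natCast_atTop_atTop.eventually_ge_atTop (X ω)] with K hK
  exact (min_eq_left hK).symm

theorem measureReal_sum_range_le_le_of_iIndepFun [IsProbabilityMeasure μ] {X : ℕ → Ω → ℝ}
    (hindep : iIndepFun X μ) (hmeas : ∀ i, AEMeasurable (X i) μ) {a b c : ℝ}
    (hbdd : ∀ i, ∀ᵐ ω ∂μ, X i ω ∈ Set.Icc a b) (hmean : ∀ i, μ[X i] = c) (n : ℕ) {δ : ℝ}
    (hδ : 0 ≤ δ) :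
    μ.real {ω | ∑ i ∈ Finset.range n, X i ω ≤ n * (c - δ)} ≤
      exp (-2 * δ ^ 2 / (b - a) ^ 2) ^ n := by
  set Z : ℕ → Ω → ℝ := fun i ω => -(X i ω - c)
  have hZ_indep : iIndepFun Z μ := hindep.comp (fun _ x => -(x - c)) fun _ => by fun_prop
  have hZ_subG : ∀ i < n, HasSubgaussianMGF (Z i) ((‖b - a‖₊ / 2) ^ 2) μ := fun i _ => by
    have h := (hasSubgaussianMGF_of_mem_Icc (hmeas i) (hbdd i)).neg
    rwa [hmean i] at h
  have hset : {ω | ∑ i ∈ Finset.range n, X i ω ≤ n * (c - δ)} =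
      {ω | n * δ ≤ ∑ i ∈ Finset.range n, Z i ω} := by
    ext ω
    simp only [Set.mem_ofPred_eq, Z, Finset.sum_neg_distrib, Finset.sum_sub_distrib,
      Finset.sum_const, Finset.card_range, nsmul_eq_mul]
    constructor <;> intro h <;> linarith
  rw [hset, ← exp_nat_mul]
  convert HasSubgaussianMGF.measure_sum_range_ge_le_of_iIndepFun hZ_indep hZ_subG
    (ε := n * δ) (by positivity) using 2
  push_cast
  rw [Real.norm_eq_abs, div_pow, sq_abs]
  -- for `n = 0` or `b = a` both exponents are `0`, by `x / 0 = 0`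
  rcases eq_or_ne (n : ℝ) 0 with hn | hn
  · simp [hn]
  rcases eq_or_ne (b - a) 0 with hab | hab
  · simp [hab]
  field_simp

end

theorem iid_sum_lower_tail_exponential_bound_general
    {Ω : Type*} [MeasurableSpace Ω] (μ : Measure Ω) [IsProbabilityMeasure μ]
    (X : ℕ → Ω → ℕ)
    (hindep : iIndepFun X μ)
    (hident : ∀ i, IdentDistrib (X i) (X 0) μ μ)
    (hint : Integrable (fun ω => (X 0 ω : ℝ)) μ)
    (hmean : 1 < ∫ ω, (X 0 ω : ℝ) ∂μ) :
    ∃ ε : ℝ, 0 < ε ∧ ∃ A ∈ Set.Ioo (0:ℝ) 1, ∀ n : ℕ, 1 ≤ n → ∀ m : ℕ,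
      (m : ℝ) ≤ (1 + ε) * n →
      μ {ω | (∑ i ∈ Finset.range n, X i ω) < m} ≤ ENNReal.ofReal (A ^ n) := by
  obtain ⟨K, hK, hK_pos⟩ : ∃ K : ℕ, 1 < ∫ ω, min (X 0 ω : ℝ) K ∂μ ∧ 0 < K :=
    (((tendsto_integral_min_natCast hint).eventually (lt_mem_nhds hmean)).and
      (eventually_gt_atTop 0)).exists
  set truncate : ℕ → ℝ := fun x => min (x : ℝ) K
  have h_truncate : Measurable truncate := measurable_from_top
  set c := ∫ ω, truncate (X 0 ω) ∂μ
  set δ := (c - 1) / 2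
  have hδ : 0 < δ := by simp only [δ]; linarith
  refine ⟨δ, hδ, exp (-2 * δ ^ 2 / K ^ 2), ⟨exp_pos _, exp_lt_one_iff.2 ?_⟩, fun n _ m hm => ?_⟩
  · have : (0 : ℝ) < K := by exact_mod_cast hK_pos
    exact div_neg_of_neg_of_pos (by nlinarith) (by positivity)
  have h_tail := measureReal_sum_range_le_le_of_iIndepFun
    (hindep.comp (fun _ => truncate) fun _ => h_truncate)
    (fun i => h_truncate.comp_aemeasurable (hident i).aemeasurable_fst)
    (a := 0) (b := K) (c := c) (fun i => ae_of_all _ fun ω =>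
      ⟨le_min (Nat.cast_nonneg _) (Nat.cast_nonneg _), min_le_right _ _⟩)
    (fun i => ((hident i).comp h_truncate).integral_eq) n hδ.le
  rw [sub_zero] at h_tail
  rw [← ofReal_measureReal]
  refine ENNReal.ofReal_le_ofReal ((measureReal_mono fun ω hω => ?_).trans h_tail)
  simp only [Set.mem_ofPred_eq, Function.comp_apply] at hω ⊢
  calc ∑ i ∈ Finset.range n, truncate (X i ω)
      ≤ ∑ i ∈ Finset.range n, (X i ω : ℝ) := Finset.sum_le_sum fun i _ => min_le_left _ _
    _ ≤ m := by exact_mod_cast hω.le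
    _ ≤ n * (c - δ) := by simp only [δ] at hm ⊢; linarith

/-- For i.i.d. ℕ-valued random variables with finite mean μ = E[X_1] > 1,
there exist ε > 0 and A ∈ (0,1) such that for every n ≥ 1 and every m ≤ (1+ε)·n,
P(X_1 + ... + X_n < m) ≤ A^n. -/
theorem iid_sum_lower_tail_exponential_bound
    {Ω : Type*} [MeasurableSpace Ω] (μ : Measure Ω) [IsProbabilityMeasure μ]
    (X : ℕ → Ω → ℕ) (hmeas : ∀ i, Measurable (X i))
    (hindep : iIndepFun X μ)
    (hident : ∀ i, IdentDistrib (X i) (X 0) μ μ)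
    (hint : Integrable (fun ω => (X 0 ω : ℝ)) μ)
    (hmean : 1 < ∫ ω, (X 0 ω : ℝ) ∂μ) :
    ∃ ε : ℝ, 0 < ε ∧ ∃ A ∈ Set.Ioo (0:ℝ) 1, ∀ n : ℕ, 1 ≤ n → ∀ m : ℕ,
      (m : ℝ) ≤ (1 + ε) * n →
      μ {ω | (∑ i ∈ Finset.range n, X i ω) < m} ≤ ENNReal.ofReal (A ^ n) :=
  iid_sum_lower_tail_exponential_bound_general μ X hindep hident hint hmean
end

section
/- Let X be a random variable taking values in the natural numbers {0,1,2,...} with finite mean μ = E[X] > 1, and let f(u) = E[u^X] denote its probability generating function for u ∈ [0,1]. Then there exist u₀ ∈ (0,1) and ε > 0 such that f(u₀) < u₀^{1+ε}. -/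
open MeasureTheory ProbabilityTheory Filter Topology Finset

/-!
Writing `u ^ n = 1 - (1 - u) * ∑_{i < n} u ^ i`, the generating function is
`f u = 1 - (1 - u) * E[∑_{i < X} u ^ i]`. As `u → 1⁻` the expectation tends to `E[X] > 1` by
dominated convergence (the sum is at most `X`), so `f u < u` for some `u ∈ (0, 1)`; by continuity
of `ε ↦ u ^ (1 + ε)` the strict inequality survives a small `ε > 0`.
-/

lemma geom_sum_le_of_le_one {u : ℝ} (hu0 : 0 ≤ u) (hu1 : u ≤ 1) (n : ℕ) :
    ∑ i ∈ range n, u ^ i ≤ n := by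
  simpa using sum_le_sum fun i (_ : i ∈ range n) => pow_le_one₀ hu0 hu1

lemma tendsto_geom_sum_nhdsLT_one (n : ℕ) :
    Tendsto (fun u : ℝ => ∑ i ∈ range n, u ^ i) (𝓝[<] 1) (𝓝 n) := by
  have hcont : Continuous fun u : ℝ => ∑ i ∈ range n, u ^ i := by fun_prop
  simpa using (hcont.tendsto 1).mono_left nhdsWithin_le_nhds

section GeneratingFunction

variable {Ω : Type*} [MeasurableSpace Ω] {μ : Measure Ω} {X : Ω → ℕ}

lemma integrable_geom_sum (hX : Measurable X) (hint : Integrable (fun ω => (X ω : ℝ)) μ)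
    {u : ℝ} (hu0 : 0 ≤ u) (hu1 : u ≤ 1) :
    Integrable (fun ω => ∑ i ∈ range (X ω), u ^ i) μ := by
  refine hint.mono ((measurable_from_nat (f := fun n => ∑ i ∈ range n, u ^ i)).comp hX).aestronglyMeasurable (ae_of_all _ fun ω => ?_)
  rw [Real.norm_of_nonneg (sum_nonneg fun i _ => pow_nonneg hu0 i), Real.norm_natCast]
  exact geom_sum_le_of_le_one hu0 hu1 _

lemma tendsto_integral_geom_sum_nhdsLT_one (hX : Measurable X)
    (hint : Integrable (fun ω => (X ω : ℝ)) μ) :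
    Tendsto (fun u : ℝ => ∫ ω, ∑ i ∈ range (X ω), u ^ i ∂μ) (𝓝[<] 1)
      (𝓝 (∫ ω, (X ω : ℝ) ∂μ)) := by
  have hIoo : ∀ᶠ u in 𝓝[<] (1 : ℝ), u ∈ Set.Ioo 0 1 := Ioo_mem_nhdsLT one_pos
  refine tendsto_integral_filter_of_dominated_convergence (fun ω => (X ω : ℝ))
    (hIoo.mono fun u hu => (integrable_geom_sum hX hint hu.1.le hu.2.le).aestronglyMeasurable)
    (hIoo.mono fun u hu => ae_of_all _ fun ω => ?_) hint
    (ae_of_all _ fun ω => tendsto_geom_sum_nhdsLT_one (X ω))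
  rw [Real.norm_of_nonneg (sum_nonneg fun i _ => pow_nonneg hu.1.le i)]
  exact geom_sum_le_of_le_one hu.1.le hu.2.le _

lemma integral_pow_eq_one_sub_mul_integral_geom_sum [IsProbabilityMeasure μ] (hX : Measurable X)
    (hint : Integrable (fun ω => (X ω : ℝ)) μ) {u : ℝ} (hu0 : 0 ≤ u) (hu1 : u ≤ 1) :
    ∫ ω, u ^ X ω ∂μ = 1 - (1 - u) * ∫ ω, ∑ i ∈ range (X ω), u ^ i ∂μ := by
  have hpow : (fun ω => u ^ X ω) = fun ω => 1 - (1 - u) * ∑ i ∈ range (X ω), u ^ i := by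
    ext ω
    rw [mul_neg_geom_sum, sub_sub_cancel]
  rw [hpow, integral_sub (integrable_const 1) ((integrable_geom_sum hX hint hu0 hu1).const_mul _),
    integral_const_mul]
  simp

lemma exists_integral_pow_lt_self [IsProbabilityMeasure μ] (hX : Measurable X)
    (hint : Integrable (fun ω => (X ω : ℝ)) μ) (hmean : 1 < ∫ ω, (X ω : ℝ) ∂μ) :
    ∃ u ∈ Set.Ioo (0 : ℝ) 1, ∫ ω, u ^ X ω ∂μ < u := by
  have hIoo : ∀ᶠ u in 𝓝[<] (1 : ℝ), u ∈ Set.Ioo 0 1 := Ioo_mem_nhdsLT one_pos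
  obtain ⟨u, hu, hgt⟩ := (hIoo.and
    ((tendsto_integral_geom_sum_nhdsLT_one hX hint).eventually (eventually_gt_nhds hmean))).exists
  refine ⟨u, hu, ?_⟩
  rw [integral_pow_eq_one_sub_mul_integral_geom_sum hX hint hu.1.le hu.2.le]
  nlinarith [hu.2]

end GeneratingFunction

lemma exists_lt_rpow_one_add {u a : ℝ} (hu : 0 < u) (ha : a < u) :
    ∃ ε : ℝ, 0 < ε ∧ a < u ^ (1 + ε) := by
  have hcont : Tendsto (fun ε : ℝ => u ^ (1 + ε)) (𝓝 0) (𝓝 u) := by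
    have := ((Real.continuousAt_const_rpow hu.ne').comp
      (continuous_const_add (1 : ℝ)).continuousAt (x := 0)).tendsto
    simpa [Function.comp_def] using this
  obtain ⟨ε, hlt, hε⟩ := ((hcont.eventually (lt_mem_nhds ha)).filter_mono nhdsWithin_le_nhds
    |>.and (self_mem_nhdsWithin : Set.Ioi (0 : ℝ) ∈ 𝓝[>] 0)).exists
  exact ⟨ε, hε, hlt⟩

/-- For an ℕ-valued random variable X with finite mean E[X] > 1 and
probability generating function f(u) = E[u^X], there exist u₀ ∈ (0,1) and ε > 0
such that f(u₀) < u₀^(1+ε). -/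
theorem pgf_below_power_of_mean_gt_one
    {Ω : Type*} [MeasurableSpace Ω] (μ : Measure Ω) [IsProbabilityMeasure μ]
    (X : Ω → ℕ) (hmeas : Measurable X)
    (hint : Integrable (fun ω => (X ω : ℝ)) μ)
    (hmean : 1 < ∫ ω, (X ω : ℝ) ∂μ) :
    ∃ u₀ ∈ Set.Ioo (0:ℝ) 1, ∃ ε : ℝ, 0 < ε ∧
      (∫ ω, u₀ ^ (X ω) ∂μ) < u₀ ^ ((1:ℝ) + ε) := by
  obtain ⟨u₀, hu₀, hlt⟩ := exists_integral_pow_lt_self hmeas hint hmean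
  obtain ⟨ε, hε, hpow⟩ := exists_lt_rpow_one_add hu₀.1 hlt
  exact ⟨u₀, hu₀, ε, hε, hpow⟩
end

section
/- Let Λ be a finite measure on the interval [0,1] and for each integer N ≥ 2 define λ_N := Σ_{k=2}^{N} binom(N,k) ∫_{[0,1]} x^{k-2}(1-x)^{N-k} dΛ(x). Then for all integers 2 ≤ N ≤ M one has λ_N ≤ λ_M and λ_M · N(N-1) ≤ λ_N · M(M-1). -/
/-! Writing `y = 1 - x`, Pascal's rule gives the pointwise identity
`∑_{k=2}^N C(N,k) x^(k-2) y^(N-k) = ∑_{n<N} n y^(n-1)`, so `λ_N = ∑_{n<N} n c_n` with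
`c_n = ∫_{[0,1]} (1-x)^(n-1) dΛ` nonnegative and nonincreasing. Hence `λ_N` increases, while
`λ_N / (N(N-1)/2)` is the `n`-weighted average of `c_0, …, c_{N-1}` and so can only decrease. -/

open MeasureTheory Finset

theorem Antitone.mul_le_two_mul_sum_range {c : ℕ → ℝ} (hc : Antitone c) {N m : ℕ}
    (hNm : N ≤ m) :
    c m * (N * (N - 1)) ≤ 2 * ∑ n ∈ range N, n * c n := by
  induction N with
  | zero => simp
  | succ N ih =>
    have hcm : c m ≤ c N := hc (by omega)
    rw [sum_range_succ]
    push_cast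
    nlinarith [ih (by omega), (N.cast_nonneg : (0 : ℝ) ≤ N)]

theorem Antitone.sum_range_mul_mul_le {c : ℕ → ℝ} (hc : Antitone c) {N M : ℕ} (hNM : N ≤ M) :
    (∑ n ∈ range M, n * c n) * (N * (N - 1)) ≤ (∑ n ∈ range N, n * c n) * (M * (M - 1)) := by
  induction M, hNM using Nat.le_induction with
  | base => rfl
  | succ M hNM ih =>
    have hstep := hc.mul_le_two_mul_sum_range hNM
    rw [sum_range_succ]
    push_cast
    nlinarith [hstep, (M.cast_nonneg : (0 : ℝ) ≤ M)]

theorem sum_antidiagonal_choose_add_two_mul_pow_mul_pow {R : Type*} [CommRing R] {x y : R}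
    (hxy : x + y = 1) (n : ℕ) :
    ∑ p ∈ antidiagonal n, ((n + 2).choose (p.1 + 2) : R) * (x ^ p.1 * y ^ p.2) =
      ∑ m ∈ range (n + 1), ((m : R) + 1) * y ^ m := by
  induction n with
  | zero => simp
  | succ n ih =>
    have hsplit :
        ∑ p ∈ antidiagonal (n + 1), ((n + 1 + 2).choose (p.1 + 2) : R) * (x ^ p.1 * y ^ p.2) =
        ∑ p ∈ antidiagonal (n + 1), ((n + 2).choose (p.1 + 1) : R) * (x ^ p.1 * y ^ p.2) +
        ∑ p ∈ antidiagonal (n + 1), ((n + 2).choose (p.1 + 2) : R) * (x ^ p.1 * y ^ p.2) := by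
      rw [← sum_add_distrib]
      refine sum_congr rfl fun p _ => ?_
      rw [show n + 1 + 2 = n + 2 + 1 by ring, Nat.choose_succ_succ]
      push_cast; ring
    rw [hsplit, Nat.sum_antidiagonal_succ, Nat.sum_antidiagonal_succ', sum_range_succ, ← ih,
      Nat.choose_eq_zero_of_lt (by omega : n + 2 < n + 1 + 2)]
    set F := ∑ p ∈ antidiagonal n, ((n + 2).choose (p.1 + 2) : R) * (x ^ p.1 * y ^ p.2)
    have hxF :
        ∑ p ∈ antidiagonal n, ((n + 2).choose (p.1 + 1 + 1) : R) * (x ^ (p.1 + 1) * y ^ p.2) =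
          x * F := by
      rw [mul_sum]; exact sum_congr rfl fun p _ => by ring
    have hyF :
        ∑ p ∈ antidiagonal n, ((n + 2).choose (p.1 + 2) : R) * (x ^ p.1 * y ^ (p.2 + 1)) =
          y * F := by
      rw [mul_sum]; exact sum_congr rfl fun p _ => by ring
    simp only [hxF, hyF, zero_add, Nat.choose_one_right]
    push_cast
    linear_combination F * hxy

theorem sum_Icc_choose_mul_pow_mul_one_sub_pow {R : Type*} [CommRing R] (x : R) (N : ℕ) :
    ∑ k ∈ Icc 2 N, (N.choose k : R) * (x ^ (k - 2) * (1 - x) ^ (N - k)) =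
      ∑ n ∈ range N, (n : R) * (1 - x) ^ (n - 1) := by
  obtain _ | _ | n := N
  · simp
  · simp
  have hreindex :
      ∑ k ∈ Icc 2 (n + 2), ((n + 2).choose k : R) * (x ^ (k - 2) * (1 - x) ^ (n + 2 - k)) =
        ∑ p ∈ antidiagonal n, ((n + 2).choose (p.1 + 2) : R) * (x ^ p.1 * (1 - x) ^ p.2) := by
    rw [Nat.sum_antidiagonal_eq_sum_range_succ_mk, ← Ico_add_one_right_eq_Icc,
      sum_Ico_eq_sum_range]
    refine sum_congr (by simp) fun k _ => ?_
    rw [add_comm 2 k, Nat.add_sub_cancel, show n + 2 - (k + 2) = n - k by omega]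
  rw [hreindex, sum_antidiagonal_choose_add_two_mul_pow_mul_pow (add_sub_cancel x 1),
    sum_range_succ' _ (n + 1)]
  simp

theorem sum_mul_integral_eq_integral_sum {α ι : Type*} [MeasurableSpace α] {μ : Measure α}
    (s : Finset ι) (a : ι → ℝ) {g : ι → α → ℝ} (hg : ∀ i ∈ s, Integrable (g i) μ) :
    ∑ i ∈ s, a i * ∫ x, g i x ∂μ = ∫ x, ∑ i ∈ s, a i * g i x ∂μ := by
  rw [integral_finsetSum s fun i hi => (hg i hi).const_mul (a i)]
  simp_rw [integral_const_mul]

/-- For a finite measure Λ on [0,1] and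
λ_N := Σ_{k=2}^N binom(N,k) ∫ x^(k-2)(1-x)^(N-k) dΛ(x), one has, for 2 ≤ N ≤ M,
λ_N ≤ λ_M and λ_M · N(N-1) ≤ λ_N · M(M-1). -/
theorem lambdaCoal_totalRate_monotone_bounds
    (Λ : Measure ℝ) [IsFiniteMeasure Λ]
    (lam : ℕ → ℝ)
    (hlam : ∀ N : ℕ, lam N = ∑ k ∈ Finset.Icc 2 N, (N.choose k : ℝ) *
      ∫ x in Set.Icc (0:ℝ) 1, x ^ (k - 2) * (1 - x) ^ (N - k) ∂Λ) :
    ∀ N M : ℕ, 2 ≤ N → N ≤ M →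
      lam N ≤ lam M ∧
      lam M * ((N : ℝ) * ((N : ℝ) - 1)) ≤ lam N * ((M : ℝ) * ((M : ℝ) - 1)) := by
  set c : ℕ → ℝ := fun n => ∫ x in Set.Icc (0:ℝ) 1, (1 - x) ^ (n - 1) ∂Λ
  have hlam_eq : ∀ N, lam N = ∑ n ∈ range N, n * c n := fun N => by
    rw [hlam,
      sum_mul_integral_eq_integral_sum _ _ fun k _ => (by fun_prop : Continuous _).integrableOn_Icc,
      sum_mul_integral_eq_integral_sum _ _ fun n _ => (by fun_prop : Continuous _).integrableOn_Icc]
    simp_rw [sum_Icc_choose_mul_pow_mul_one_sub_pow]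
  have hc_nonneg : ∀ n, 0 ≤ c n := fun n =>
    setIntegral_nonneg measurableSet_Icc fun x hx => pow_nonneg (sub_nonneg.2 hx.2) _
  have hc_anti : Antitone c := fun m n hmn =>
    setIntegral_mono_on ((by fun_prop : Continuous _).integrableOn_Icc)
      ((by fun_prop : Continuous _).integrableOn_Icc) measurableSet_Icc fun x hx =>
        pow_le_pow_of_le_one (sub_nonneg.2 hx.2) (by linarith [hx.1]) (by omega)
  intro N M _ hNM
  rw [hlam_eq, hlam_eq]
  exact ⟨sum_le_sum_of_subset_of_nonneg (range_subset_range.2 hNM) fun n _ _ =>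
      mul_nonneg n.cast_nonneg (hc_nonneg n), hc_anti.sum_range_mul_mul_le hNM⟩
end

section
/- Let Λ be a finite measure on the interval [0,1]. Then for all integers N and k with 2 ≤ k ≤ N, Σ_{j=2}^{N} (j)_k · binom(N,j) · ∫_{[0,1]} x^{j-2}(1-x)^{N-j} dΛ(x) = (N)_k · ∫_{[0,1]} x^{k-2} dΛ(x), where (n)_k := n(n-1)···(n-k+1) denotes the falling factorial. -/
/-!
Pointwise in `x`, the sum is the factorial-moment identity `E[(B)_k] = (N)_k x^k` for
`B ~ Binomial(N, x)`, divided by `x²`: the terms with `j < k` vanish, and after the shift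
`j = k + i` the identity `(k+i)_k C(N, k+i) = (N)_k C(N-k, i)` turns the rest into
`(N)_k x^(k-2) (x + (1 - x))^(N-k)` by the binomial theorem. Integrating over `[0,1]` gives the claim.
-/

open MeasureTheory Finset

theorem Nat.descFactorial_mul_choose_add (N k i : ℕ) :
    (k + i).descFactorial k * N.choose (k + i) = N.descFactorial k * (N - k).choose i := by
  rw [Nat.descFactorial_eq_factorial_mul_choose, Nat.descFactorial_eq_factorial_mul_choose,
    mul_assoc, mul_assoc, mul_comm ((k + i).choose k), Nat.choose_mul (Nat.le_add_right k i),
    Nat.add_sub_cancel_left]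

theorem sum_descFactorial_mul_choose_mul_pow {R : Type*} [CommSemiring R] (x y : R)
    {m k N : ℕ} (hmk : m ≤ k) (hkN : k ≤ N) :
    ∑ j ∈ Icc m N, (j.descFactorial k : R) * N.choose j * (x ^ (j - m) * y ^ (N - j))
      = N.descFactorial k * x ^ (k - m) * (x + y) ^ (N - k) := by
  have below_k_vanish : ∀ j ∈ Icc m N, j ∉ Icc k N →
      (j.descFactorial k : R) * N.choose j * (x ^ (j - m) * y ^ (N - j)) = 0 := by
    intro j hj hjk
    have : j < k := by simp only [mem_Icc] at hj hjk; omega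
    simp [Nat.descFactorial_eq_zero_iff_lt.2 this]
  have shifted_term : ∀ i ∈ range (N - k + 1),
      ((k + i).descFactorial k : R) * N.choose (k + i) * (x ^ (k + i - m) * y ^ (N - (k + i)))
        = N.descFactorial k * x ^ (k - m) * (x ^ i * y ^ (N - k - i) * (N - k).choose i) := by
    intro i _
    have hcoeff : ((k + i).descFactorial k : R) * N.choose (k + i)
        = N.descFactorial k * (N - k).choose i := by
      rw [← Nat.cast_mul, ← Nat.cast_mul, Nat.descFactorial_mul_choose_add]
    rw [hcoeff, show k + i - m = k - m + i by omega, pow_add, Nat.sub_add_eq]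
    ring
  rw [← sum_subset (Icc_subset_Icc_left hmk) below_k_vanish, ← Ico_add_one_right_eq_Icc,
    sum_Ico_eq_sum_range, show N + 1 - k = N - k + 1 by omega, sum_congr rfl shifted_term,
    ← mul_sum, add_pow]

/-- For a finite measure Λ on [0,1] and 2 ≤ k ≤ N,
Σ_{j=2}^N (j)_k · binom(N,j) · ∫ x^(j-2)(1-x)^(N-j) dΛ(x) = (N)_k · ∫ x^(k-2) dΛ(x),
where (n)_k is the falling factorial. -/
theorem factorial_moment_first_merger_size
    (Λ : Measure ℝ) [IsFiniteMeasure Λ] :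
    ∀ N k : ℕ, 2 ≤ k → k ≤ N →
      ∑ j ∈ Finset.Icc 2 N, (j.descFactorial k : ℝ) * (N.choose j : ℝ) *
          ∫ x in Set.Icc (0:ℝ) 1, x ^ (j - 2) * (1 - x) ^ (N - j) ∂Λ
        = (N.descFactorial k : ℝ) * ∫ x in Set.Icc (0:ℝ) 1, x ^ (k - 2) ∂Λ := by
  intro N k hk hkN
  have hint : ∀ j ∈ Icc 2 N, Integrable (fun x : ℝ => (j.descFactorial k : ℝ) * N.choose j *
      (x ^ (j - 2) * (1 - x) ^ (N - j))) (Λ.restrict (Set.Icc 0 1)) := fun j _ =>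
    Continuous.integrableOn_Icc (by fun_prop)
  simp_rw [← integral_const_mul]
  rw [← integral_finsetSum _ hint]
  congr 1 with x
  rw [sum_descFactorial_mul_choose_mul_pow x (1 - x) hk hkN, add_sub_cancel, one_pow, mul_one]
end

section
/- Let Λ be a finite measure on the interval [0,1] and for each integer N ≥ 2 define λ_N := Σ_{k=2}^{N} binom(N,k) ∫_{[0,1]} x^{k-2}(1-x)^{N-k} dΛ(x). Then the sequence (λ_N)_{N≥2} is nondecreasing and lim_{N→∞} λ_N = ∫_{[0,1]} x^{-2} dΛ(x) in the extended nonnegative reals, where x^{-2} is interpreted as +∞ at x = 0; in particular λ_N → ∞ as N → ∞ if and only if ∫_{[0,1]} x^{-2} dΛ(x) = ∞. -/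
open MeasureTheory Filter Topology
open scoped ENNReal

/-!
With `y = 1 - x`, the binomial theorem gives
`x² · ∑ₖ C(N,k) x^(k-2) y^(N-k) = 1 - y^N - N x y^(N-1) = x² · ∑_{j<N-1} (j+1) y^j`.
Cancelling `x²` in `R[X]`, where `X²` is regular, the integrand of `λ_N` is therefore the partial
sum of `∑ⱼ (j+1) y^j = (1 - y)⁻² = x⁻²` at every `x` including `x = 0`. Integrating termwise,
`λ_N` is the `(N-1)`-st partial sum of a series in `[0, ∞]` whose sum is `∫ x⁻² dΛ`.
-/

open Finset

section CommRing

variable {R : Type*} [CommRing R]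

theorem sq_mul_sum_choose_mul_pow_one_sub (x : R) (N : ℕ) :
    x ^ 2 * ∑ k ∈ Icc 2 N, (N.choose k : R) * (x ^ (k - 2) * (1 - x) ^ (N - k)) =
      1 - (1 - x) ^ N - N * x * (1 - x) ^ (N - 1) := by
  rcases N with _ | N
  · simp
  have hbinom := add_pow x (1 - x) (N + 1)
  have hrange : range (N + 2) = insert 0 (insert 1 (Icc 2 (N + 1))) := by
    ext k; simp only [mem_range, mem_insert, mem_Icc]; omega
  rw [add_sub_cancel, one_pow, hrange, sum_insert (by simp), sum_insert (by simp)] at hbinom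
  have hterms : x ^ 2 * ∑ k ∈ Icc 2 (N + 1),
      ((N + 1).choose k : R) * (x ^ (k - 2) * (1 - x) ^ (N + 1 - k)) =
        ∑ k ∈ Icc 2 (N + 1), x ^ k * (1 - x) ^ (N + 1 - k) * ((N + 1).choose k : R) := by
    rw [mul_sum]
    refine sum_congr rfl fun k hk => ?_
    obtain ⟨j, rfl⟩ := Nat.exists_eq_add_of_le (mem_Icc.mp hk).1
    rw [Nat.add_sub_cancel_left, pow_add]
    ring
  simp only [pow_zero, Nat.sub_zero, Nat.choose_zero_right, Nat.cast_one, mul_one, one_mul,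
    pow_one, Nat.choose_one_right, Nat.add_sub_cancel] at hbinom ⊢
  rw [hterms]
  linear_combination -hbinom

theorem sq_mul_sum_range_succ_mul_pow (x : R) (N : ℕ) :
    x ^ 2 * ∑ j ∈ range (N - 1), ((j + 1 : ℕ) : R) * (1 - x) ^ j =
      1 - (1 - x) ^ N - N * x * (1 - x) ^ (N - 1) := by
  induction N with
  | zero => simp
  | succ N ih =>
    rcases N with _ | N
    · simp
    · simp only [Nat.add_sub_cancel] at ih ⊢
      rw [sum_range_succ, mul_add, ih]
      push_cast
      ring

open Polynomial in
theorem sum_choose_mul_pow_one_sub_eq_sum_range (x : R) (N : ℕ) :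
    ∑ k ∈ Icc 2 N, (N.choose k : R) * (x ^ (k - 2) * (1 - x) ^ (N - k)) =
      ∑ j ∈ range (N - 1), ((j + 1 : ℕ) : R) * (1 - x) ^ j := by
  have hX : ∑ k ∈ Icc 2 N, (N.choose k : R[X]) * (X ^ (k - 2) * (1 - X) ^ (N - k)) =
      ∑ j ∈ range (N - 1), ((j + 1 : ℕ) : R[X]) * (1 - X) ^ j :=
    (isRegular_X_pow 2).left <| by
      simp only [sq_mul_sum_choose_mul_pow_one_sub, sq_mul_sum_range_succ_mul_pow]
  simpa [eval_finsetSum] using congrArg (eval x) hX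

end CommRing

theorem ENNReal.tsum_succ_mul_pow (r : ℝ≥0∞) :
    ∑' n : ℕ, ((n + 1 : ℕ) : ℝ≥0∞) * r ^ n = (1 - r)⁻¹ ^ 2 := by
  rw [← ENNReal.tsum_geometric]
  -- `n + 1` is the number of pairs `(k, l)` with `k + l = n`: a Cauchy product.
  calc ∑' n : ℕ, ((n + 1 : ℕ) : ℝ≥0∞) * r ^ n
      = ∑' n : ℕ, ∑' kl : antidiagonal n, r ^ (kl.1.1 + kl.1.2) := by
        refine tsum_congr fun n => ?_
        rw [tsum_fintype (L := .unconditional _),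
          sum_coe_sort (antidiagonal n) (fun kl => r ^ (kl.1 + kl.2)),
          sum_congr rfl fun kl hkl => by rw [mem_antidiagonal.mp hkl], sum_const,
          Nat.card_antidiagonal, nsmul_eq_mul]
    _ = ∑' p : ℕ × ℕ, r ^ (p.1 + p.2) := by
        rw [← HasAntidiagonal.sigmaAntidiagonalEquivProd.tsum_eq]
        exact (ENNReal.tsum_sigma (fun n (kl : antidiagonal n) => r ^ (kl.1.1 + kl.1.2))).symm
    _ = (∑' n : ℕ, r ^ n) ^ 2 := by
        simp only [pow_add, ENNReal.tsum_prod (f := fun k l => r ^ k * r ^ l),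
          ENNReal.tsum_mul_left, ENNReal.tsum_mul_right, sq]

theorem sum_choose_mul_ofReal_eq_sum_range {x : ℝ} (hx : x ∈ Set.Icc (0 : ℝ) 1) (N : ℕ) :
    ∑ k ∈ Icc 2 N, (N.choose k : ℝ≥0∞) * ENNReal.ofReal (x ^ (k - 2) * (1 - x) ^ (N - k)) =
      ∑ j ∈ range (N - 1), ((j + 1 : ℕ) : ℝ≥0∞) * ENNReal.ofReal (1 - x) ^ j := by
  have h1x : 0 ≤ 1 - x := sub_nonneg.mpr hx.2
  calc ∑ k ∈ Icc 2 N, (N.choose k : ℝ≥0∞) * ENNReal.ofReal (x ^ (k - 2) * (1 - x) ^ (N - k))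
      = ENNReal.ofReal (∑ k ∈ Icc 2 N, (N.choose k : ℝ) * (x ^ (k - 2) * (1 - x) ^ (N - k))) := by
        rw [ENNReal.ofReal_sum_of_nonneg fun k _ => by have := hx.1; positivity]
        simp only [ENNReal.ofReal_mul (Nat.cast_nonneg _), ENNReal.ofReal_natCast]
    _ = ENNReal.ofReal (∑ j ∈ range (N - 1), ((j + 1 : ℕ) : ℝ) * (1 - x) ^ j) := by
        rw [sum_choose_mul_pow_one_sub_eq_sum_range]
    _ = ∑ j ∈ range (N - 1), ((j + 1 : ℕ) : ℝ≥0∞) * ENNReal.ofReal (1 - x) ^ j := by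
        rw [ENNReal.ofReal_sum_of_nonneg fun j _ => by positivity]
        simp only [ENNReal.ofReal_mul (Nat.cast_nonneg _), ENNReal.ofReal_natCast,
          ENNReal.ofReal_pow h1x]

theorem sum_choose_mul_setLIntegral_eq_sum_range (Λ : Measure ℝ) (N : ℕ) :
    ∑ k ∈ Icc 2 N, (N.choose k : ℝ≥0∞) *
        ∫⁻ x in Set.Icc (0 : ℝ) 1, ENNReal.ofReal (x ^ (k - 2) * (1 - x) ^ (N - k)) ∂Λ =
      ∑ j ∈ range (N - 1), ((j + 1 : ℕ) : ℝ≥0∞) *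
        ∫⁻ x in Set.Icc (0 : ℝ) 1, ENNReal.ofReal (1 - x) ^ j ∂Λ := by
  simp only [← lintegral_const_mul' _ _ (ENNReal.natCast_ne_top _)]
  rw [← lintegral_finsetSum' _ fun k _ => by fun_prop,
    ← lintegral_finsetSum' _ fun j _ => by fun_prop]
  exact setLIntegral_congr_fun measurableSet_Icc fun x hx =>
    sum_choose_mul_ofReal_eq_sum_range hx N

theorem tsum_succ_mul_setLIntegral_pow_eq (Λ : Measure ℝ) :
    ∑' j : ℕ, ((j + 1 : ℕ) : ℝ≥0∞) * ∫⁻ x in Set.Icc (0 : ℝ) 1, ENNReal.ofReal (1 - x) ^ j ∂Λ =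
      ∫⁻ x in Set.Icc (0 : ℝ) 1, (ENNReal.ofReal x) ^ (-2 : ℤ) ∂Λ := by
  simp only [← lintegral_const_mul' _ _ (ENNReal.natCast_ne_top _)]
  rw [← lintegral_tsum fun j => by fun_prop]
  refine setLIntegral_congr_fun measurableSet_Icc fun x hx => ?_
  rw [ENNReal.tsum_succ_mul_pow, ← ENNReal.ofReal_one,
    ← ENNReal.ofReal_sub _ (sub_nonneg.mpr hx.2), sub_sub_cancel, ← ENNReal.inv_zpow']
  exact (zpow_ofNat _ 2).symm

theorem lambdaCoal_totalRate_tendsto_xInvSq_integral_general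
    (Λ : Measure ℝ)
    (lam : ℕ → ℝ≥0∞)
    (hlam : ∀ N : ℕ, lam N = ∑ k ∈ Finset.Icc 2 N, (N.choose k : ℝ≥0∞) *
      ∫⁻ x in Set.Icc (0:ℝ) 1, ENNReal.ofReal (x ^ (k - 2) * (1 - x) ^ (N - k)) ∂Λ) :
    (∀ N M : ℕ, 2 ≤ N → N ≤ M → lam N ≤ lam M) ∧
    Tendsto lam atTop
      (𝓝 (∫⁻ x in Set.Icc (0:ℝ) 1, (ENNReal.ofReal x) ^ (-2 : ℤ) ∂Λ)) ∧
    (Tendsto lam atTop (𝓝 ⊤) ↔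
      (∫⁻ x in Set.Icc (0:ℝ) 1, (ENNReal.ofReal x) ^ (-2 : ℤ) ∂Λ) = ⊤) := by
  set a : ℕ → ℝ≥0∞ := fun j =>
    ((j + 1 : ℕ) : ℝ≥0∞) * ∫⁻ x in Set.Icc (0 : ℝ) 1, ENNReal.ofReal (1 - x) ^ j ∂Λ
  have hlam_partialSum : lam = fun N => ∑ j ∈ range (N - 1), a j :=
    funext fun N => (hlam N).trans (sum_choose_mul_setLIntegral_eq_sum_range Λ N)
  have hlim : Tendsto lam atTop
      (𝓝 (∫⁻ x in Set.Icc (0:ℝ) 1, (ENNReal.ofReal x) ^ (-2 : ℤ) ∂Λ)) := by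
    rw [hlam_partialSum, ← tsum_succ_mul_setLIntegral_pow_eq]
    exact (ENNReal.tendsto_nat_tsum a).comp (tendsto_sub_atTop_nat 1)
  refine ⟨fun N M _ hNM => ?_, hlim, fun h => tendsto_nhds_unique hlim h, fun h => h ▸ hlim⟩
  rw [hlam_partialSum]
  exact sum_le_sum_of_subset (range_mono (by omega))

/-- For a finite measure Λ on [0,1] and
λ_N := Σ_{k=2}^N binom(N,k) ∫ x^(k-2)(1-x)^(N-k) dΛ(x) (as extended nonnegative reals),
the sequence (λ_N)_{N≥2} is nondecreasing and λ_N → ∫ x^(-2) dΛ(x) in [0,∞]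
(x^(-2) being ∞ at x = 0); in particular λ_N → ∞ iff ∫ x^(-2) dΛ(x) = ∞. -/
theorem lambdaCoal_totalRate_tendsto_xInvSq_integral
    (Λ : Measure ℝ) [IsFiniteMeasure Λ]
    (lam : ℕ → ℝ≥0∞)
    (hlam : ∀ N : ℕ, lam N = ∑ k ∈ Finset.Icc 2 N, (N.choose k : ℝ≥0∞) *
      ∫⁻ x in Set.Icc (0:ℝ) 1, ENNReal.ofReal (x ^ (k - 2) * (1 - x) ^ (N - k)) ∂Λ) :
    (∀ N M : ℕ, 2 ≤ N → N ≤ M → lam N ≤ lam M) ∧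
    Tendsto lam atTop
      (𝓝 (∫⁻ x in Set.Icc (0:ℝ) 1, (ENNReal.ofReal x) ^ (-2 : ℤ) ∂Λ)) ∧
    (Tendsto lam atTop (𝓝 ⊤) ↔
      (∫⁻ x in Set.Icc (0:ℝ) 1, (ENNReal.ofReal x) ^ (-2 : ℤ) ∂Λ) = ⊤) :=
  lambdaCoal_totalRate_tendsto_xInvSq_integral_general Λ lam hlam
end
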